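/- arXiv:2208.06520 — 5 statements merged into one kernel-verified Lean document; each statement's English description precedes it below -/
import Mathlib

section
/- Let t ≥ 2 be an integer and let V be a simple module over the subalgebra B = R_+ ⊕ ℂL_0 ⊕ ℂC of the N=1 Ramond algebra on which L_k V = 0 for all k > t. Then G_m V = 0 for all m > t. -/
/-- A module over the subalgebra B = R_+ ⊕ ℂL_0 ⊕ ℂC of the N=1 Ramond algebra,
where R_+ = span{L_m, G_m : m ≥ 1}: a ℤ₂-graded complex vector space with operators
L_m (m ≥ 0), G_m (m ≥ 1) and central charge c, satisfying the Ramond relations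
(no central terms occur since m + n > 0 in all relevant brackets). -/
structure BRep (V : Type*) [AddCommGroup V] [Module ℂ V] where
  L : ℤ → V →ₗ[ℂ] V
  G : ℤ → V →ₗ[ℂ] V
  c : ℂ
  ev : Submodule ℂ V
  od : Submodule ℂ V
  hcompl : IsCompl ev od
  hLev : ∀ m : ℤ, 0 ≤ m → ∀ v ∈ ev, L m v ∈ ev
  hLod : ∀ m : ℤ, 0 ≤ m → ∀ v ∈ od, L m v ∈ od
  hGev : ∀ m : ℤ, 1 ≤ m → ∀ v ∈ ev, G m v ∈ od
  hGod : ∀ m : ℤ, 1 ≤ m → ∀ v ∈ od, G m v ∈ ev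
  hLL : ∀ m n : ℤ, 0 ≤ m → 0 ≤ n → ∀ v : V,
    L m (L n v) - L n (L m v) = ((n : ℂ) - (m : ℂ)) • L (m + n) v
  hGG : ∀ m n : ℤ, 1 ≤ m → 1 ≤ n → ∀ v : V,
    G m (G n v) + G n (G m v) = (-2 : ℂ) • L (m + n) v
  hLG : ∀ m n : ℤ, 0 ≤ m → 1 ≤ n → ∀ v : V,
    L m (G n v) - G n (L m v) = ((n : ℂ) - (m : ℂ) / 2) • G (m + n) v

variable {V : Type*} [AddCommGroup V] [Module ℂ V]

/-- A subspace invariant under the B-action. -/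
def BRep.Invariant (ρ : BRep V) (W : Submodule ℂ V) : Prop :=
  (∀ m : ℤ, 0 ≤ m → ∀ v ∈ W, ρ.L m v ∈ W) ∧ (∀ m : ℤ, 1 ≤ m → ∀ v ∈ W, ρ.G m v ∈ W)

/-- A ℤ₂-graded subspace. -/
def BRep.Graded (ρ : BRep V) (W : Submodule ℂ V) : Prop :=
  W = W ⊓ ρ.ev ⊔ W ⊓ ρ.od

/-- Simplicity: V is nonzero and has no proper nonzero graded B-submodules. -/
def BRep.IsSimple (ρ : BRep V) : Prop :=
  (∃ v : V, v ≠ 0) ∧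
    ∀ W : Submodule ℂ V, ρ.Invariant W → ρ.Graded W → W = ⊥ ∨ W = ⊤

/-- Lemma 3.1: if V is a simple B-module with L_k V = 0 for all k > t
(t ≥ 2), then G_m V = 0 for all m > t. -/
theorem ramond_B_G_annihilates (t : ℤ) (ht : 2 ≤ t)
    (ρ : BRep V) (hsimple : ρ.IsSimple)
    (hL : ∀ k : ℤ, t < k → ∀ v : V, ρ.L k v = 0) :
    ∀ m : ℤ, t < m → ∀ v : V, ρ.G m v = 0 := by
  -- Step 1: G_m = 0 for m > t + 1, using [L_{m-1}, G_1].
  have step1 : ∀ m : ℤ, t + 1 < m → ∀ v : V, ρ.G m v = 0 := by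
    intro m hm v
    have hk : t < m - 1 := by linarith
    have h := ρ.hLG (m - 1) 1 (by linarith) le_rfl v
    rw [hL (m - 1) hk (ρ.G 1 v), hL (m - 1) hk v, map_zero, sub_zero] at h
    have hmm : m - 1 + 1 = m := by ring
    rw [hmm] at h
    have h3 : (m : ℂ) ≠ 3 := by
      have : m ≠ 3 := by omega
      exact_mod_cast this
    rcases (smul_eq_zero.mp h.symm) with hc | hGv
    · push_cast at hc
      exact absurd (by linear_combination (-2 : ℂ) * hc) h3
    · exact hGv
  -- Step 2: G_{t+1} = 0, via simplicity applied to ker G_{t+1}.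
  have hGsq : ∀ v : V, ρ.G (t + 1) (ρ.G (t + 1) v) = 0 := by
    intro v
    have h := ρ.hGG (t + 1) (t + 1) (by linarith) (by linarith) v
    rw [hL (t + 1 + (t + 1)) (by linarith) v, smul_zero] at h
    have h2 : (2 : ℂ) • ρ.G (t + 1) (ρ.G (t + 1) v) = 0 := by
      rw [two_smul]; exact h
    rcases smul_eq_zero.mp h2 with hc | hv
    · norm_num at hc
    · exact hv
  have step2 : ∀ v : V, ρ.G (t + 1) v = 0 := by
    set W := LinearMap.ker (ρ.G (t + 1)) with hW
    have hmem : ∀ v : V, v ∈ W ↔ ρ.G (t + 1) v = 0 := fun v => Iff.rfl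
    have hinv : ρ.Invariant W := by
      constructor
      · intro m hm v hv
        rw [hmem] at hv ⊢
        have h := ρ.hLG m (t + 1) hm (by linarith) v
        rw [hv, map_zero] at h
        rw [zero_sub, neg_eq_iff_eq_neg] at h
        rw [h]
        rcases lt_or_ge 0 m with hm1 | hm0
        · rw [step1 (m + (t + 1)) (by linarith) v, smul_zero, neg_zero]
        · have hm0' : m = 0 := le_antisymm hm0 hm
          subst hm0'
          rw [zero_add, hv, smul_zero, neg_zero]
      · intro m hm v hv
        rw [hmem] at hv ⊢
        have h := ρ.hGG (t + 1) m (by linarith) hm v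
        rw [hL (t + 1 + m) (by linarith) v, smul_zero, hv, map_zero] at h
        simpa using h
    have hgraded : ρ.Graded W := by
      apply le_antisymm
      · intro v hv
        have hv' : ρ.G (t + 1) v = 0 := hv
        have hvtop : v ∈ ρ.ev ⊔ ρ.od := by
          rw [ρ.hcompl.sup_eq_top]; trivial
        obtain ⟨a, ha, b, hb, hab⟩ := Submodule.mem_sup.mp hvtop
        have hsum : ρ.G (t + 1) a + ρ.G (t + 1) b = 0 := by
          rw [← map_add, hab]; exact hv'
        have hGa : ρ.G (t + 1) a ∈ ρ.od := ρ.hGev (t + 1) (by linarith) a ha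
        have hGb : ρ.G (t + 1) b ∈ ρ.ev := ρ.hGod (t + 1) (by linarith) b hb
        have hGa0 : ρ.G (t + 1) a = 0 := by
          have : ρ.G (t + 1) a ∈ ρ.ev ⊓ ρ.od := by
            refine ⟨?_, hGa⟩
            rw [eq_neg_of_add_eq_zero_left hsum]; exact ρ.ev.neg_mem hGb
          rwa [ρ.hcompl.inf_eq_bot, Submodule.mem_bot] at this
        have hGb0 : ρ.G (t + 1) b = 0 := by
          have := hsum; rw [hGa0, zero_add] at this; exact this
        rw [← hab]
        exact Submodule.add_mem_sup ⟨hGa0, ha⟩ ⟨hGb0, hb⟩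
      · exact sup_le inf_le_left inf_le_left
    rcases hsimple.2 W hinv hgraded with hbot | htop
    · exfalso
      obtain ⟨v, hv0⟩ := hsimple.1
      by_cases hGv : ρ.G (t + 1) v = 0
      · have : v ∈ W := hGv
        rw [hbot, Submodule.mem_bot] at this
        exact hv0 this
      · have : ρ.G (t + 1) v ∈ W := hGsq v
        rw [hbot, Submodule.mem_bot] at this
        exact hGv this
    · intro v
      have : v ∈ W := by rw [htop]; trivial
      exact this
  intro m hm v
  rcases eq_or_lt_of_le (by linarith : t + 1 ≤ m) with h | h
  · rw [← h]; exact step2 v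
  · exact step1 m h v
end

section
/- Let V be a simple B-module annihilated by L_k for all k > t (t ≥ 2), and fix m > t. Then the subspace Υ = G_m V is invariant under the action of L_n for all n ≥ 0 and under G_k for all k ≥ 1, i.e. Υ is a B-submodule of V. -/
variable {V : Type*} [AddCommGroup V] [Module ℂ V]

/-- let V be a simple B-module annihilated by L_k for all k > t (t ≥ 2)
and fix m > t. Then Υ = G_m V = range(G_m) is invariant under L_n for all n ≥ 0 and
under G_k for all k ≥ 1, i.e. Υ is a B-submodule of V. -/
theorem ramond_B_GmV_invariant (t : ℤ) (ht : 2 ≤ t)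
    (ρ : BRep V) (hsimple : ρ.IsSimple)
    (hL : ∀ k : ℤ, t < k → ∀ v : V, ρ.L k v = 0)
    (m : ℤ) (hm : t < m) :
    (∀ n : ℤ, 0 ≤ n → ∀ u ∈ LinearMap.range (ρ.G m),
        ρ.L n u ∈ LinearMap.range (ρ.G m)) ∧
    (∀ k : ℤ, 1 ≤ k → ∀ u ∈ LinearMap.range (ρ.G m),
        ρ.G k u ∈ LinearMap.range (ρ.G m)) := by
  -- Auxiliary: G_j vanishes for j ≥ t + 2, via [L_{j-1}, G_1] = (1-(j-1)/2) G_j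
  have hGzero : ∀ j : ℤ, t + 2 ≤ j → ∀ v : V, ρ.G j v = 0 := by
    intro j hj v
    have h1 : t < j - 1 := by omega
    have h0 : (0:ℤ) ≤ j - 1 := by omega
    have key := ρ.hLG (j - 1) 1 h0 le_rfl v
    rw [hL (j - 1) h1, hL (j - 1) h1 v, map_zero, sub_zero] at key
    have hj' : j - 1 + 1 = j := by ring
    rw [hj'] at key
    have hc : ((1 : ℂ) - ((j : ℂ) - 1) / 2) ≠ 0 := by
      have : (j : ℂ) ≠ 3 := by
        intro h
        have : j = 3 := by exact_mod_cast h
        omega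
      intro h
      apply this
      field_simp at h
      linear_combination -h
    have := (smul_eq_zero.mp key.symm).resolve_left (by push_cast at hc ⊢; exact hc)
    exact this
  constructor
  · -- L-invariance
    rintro n hn u ⟨w, rfl⟩
    have key := ρ.hLG n m hn (by omega) w
    rcases eq_or_lt_of_le hn with h0 | h1
    · -- n = 0
      have hn0 : n = 0 := h0.symm
      subst hn0
      rw [zero_add] at key
      refine ⟨ρ.L 0 w + (((m : ℤ) : ℂ) - ((0 : ℤ) : ℂ) / 2) • w, ?_⟩
      rw [map_add, map_smul, ← key]
      abel
    · -- n ≥ 1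
      have hmn : t + 2 ≤ n + m := by omega
      rw [hGzero (n + m) hmn w, smul_zero, sub_eq_zero] at key
      exact ⟨ρ.L n w, key.symm⟩
  · -- G-invariance
    rintro k hk u ⟨w, rfl⟩
    have key := ρ.hGG k m hk (by omega) w
    rw [hL (k + m) (by omega), smul_zero] at key
    refine ⟨-(ρ.G k w), ?_⟩
    rw [map_neg]
    exact (eq_neg_of_add_eq_zero_left key).symm
end

section
/- Let P be a simple restricted module over the N=1 Ramond algebra R. Then for any nonzero v ∈ P and any sufficiently large r, P is a locally nilpotent module over the subalgebra R^{(r)} = ⊕_{m>r} ℂL_m ⊕ ⊕_{m>r-1} ℂG_m; i.e., for every w ∈ P there exists n such that (R^{(r)})^n w = 0. -/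
/-- A module over the N=1 Ramond algebra with central charge `c`: a ℤ₂-graded complex
vector space with operators L_m, G_m (m ∈ ℤ) satisfying
[L_m,L_n] = (n-m)L_{m+n} + ((n³-n)/12)δ_{m+n,0}·c,
[G_m,G_n] = -2L_{m+n} + ((4m²-1)/12)δ_{m+n,0}·c,
[L_m,G_n] = (n-m/2)G_{m+n}, with C acting as the scalar c. -/
structure RamondRep (P : Type*) [AddCommGroup P] [Module ℂ P] where
  L : ℤ → P →ₗ[ℂ] P
  G : ℤ → P →ₗ[ℂ] P
  c : ℂ
  ev : Submodule ℂ P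
  od : Submodule ℂ P
  hcompl : IsCompl ev od
  hLev : ∀ m : ℤ, ∀ v ∈ ev, L m v ∈ ev
  hLod : ∀ m : ℤ, ∀ v ∈ od, L m v ∈ od
  hGev : ∀ m : ℤ, ∀ v ∈ ev, G m v ∈ od
  hGod : ∀ m : ℤ, ∀ v ∈ od, G m v ∈ ev
  hLL : ∀ m n : ℤ, ∀ v : P,
    L m (L n v) - L n (L m v) = ((n : ℂ) - (m : ℂ)) • L (m + n) v
      + (((n : ℂ) ^ 3 - (n : ℂ)) / 12 * (if m + n = 0 then c else 0)) • v
  hGG : ∀ m n : ℤ, ∀ v : P,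
    G m (G n v) + G n (G m v) = (-2 : ℂ) • L (m + n) v
      + ((4 * (m : ℂ) ^ 2 - 1) / 12 * (if m + n = 0 then c else 0)) • v
  hLG : ∀ m n : ℤ, ∀ v : P,
    L m (G n v) - G n (L m v) = ((n : ℂ) - (m : ℂ) / 2) • G (m + n) v

variable {P : Type*} [AddCommGroup P] [Module ℂ P]

/-- A subspace invariant under the whole Ramond action. -/
def RamondRep.Invariant (ρ : RamondRep P) (W : Submodule ℂ P) : Prop :=
  (∀ m : ℤ, ∀ v ∈ W, ρ.L m v ∈ W) ∧ (∀ m : ℤ, ∀ v ∈ W, ρ.G m v ∈ W)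

/-- A ℤ₂-graded subspace. -/
def RamondRep.Graded (ρ : RamondRep P) (W : Submodule ℂ P) : Prop :=
  W = W ⊓ ρ.ev ⊔ W ⊓ ρ.od

/-- Simplicity: P is nonzero and has no proper nonzero graded submodules. -/
def RamondRep.IsSimple (ρ : RamondRep P) : Prop :=
  (∃ v : P, v ≠ 0) ∧
    ∀ W : Submodule ℂ P, ρ.Invariant W → ρ.Graded W → W = ⊥ ∨ W = ⊤

/-- Restrictedness: every vector is annihilated by all L_m, G_m with m large. -/
def RamondRep.IsRestricted (ρ : RamondRep P) : Prop :=
  ∀ v : P, ∃ k : ℤ, ∀ m : ℤ, k < m → ρ.L m v = 0 ∧ ρ.G m v = 0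

/-!
Replace `v` by a nonzero homogeneous component `v'` and choose `k ≥ 0` with
`L_m v' = G_m v' = 0` for `m > k`. A word of `s` modes of total degree `> s k` kills `v'`:
some mode in it has degree `> k`, and moving it to the right end only produces commutator
terms that are shorter words of the same total degree (the central term only arises from a pair
of opposite degrees). By simplicity the words applied to `v'` span `P`, and a word of `n`
modes of degree `≥ r > k` applied to `u v'` has total degree `≥ n (k + 1) + deg u`, which exceeds
`(n + |u|) k` once `n > |u| k - deg u`.
-/

theorem List.foldr_apply_eq_prod_apply {R M : Type*} [Semiring R] [AddCommMonoid M] [Module R M]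
    (l : List (Module.End R M)) (w : M) : l.foldr (fun op u => op u) w = l.prod w := by
  induction l with
  | nil => rfl
  | cons op l ih => simp [ih]

namespace RamondRep

variable (ρ : RamondRep P)

/-- `(true, m)` encodes `L_m` and `(false, m)` encodes `G_m`, so the bracket of the modes `d`
and `e` is a multiple of the mode `(d.1 == e.1, d.2 + e.2)`. -/
def basisOp (d : Bool × ℤ) : Module.End ℂ P :=
  if d.1 then ρ.L d.2 else ρ.G d.2

theorem basisOp_mul_basisOp (d e : Bool × ℤ) :
    ∃ ε a b : ℂ, (d.2 + e.2 ≠ 0 → b = 0) ∧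
      ρ.basisOp d * ρ.basisOp e =
        ε • (ρ.basisOp e * ρ.basisOp d) + a • ρ.basisOp (d.1 == e.1, d.2 + e.2) + b • 1 := by
  obtain ⟨_ | _, m⟩ := d <;> obtain ⟨_ | _, p⟩ := e <;>
    simp only [basisOp, Bool.false_eq_true, ↓reduceIte, BEq.rfl, beq_true, beq_false, Bool.not_true]
  · refine ⟨-1, -2, (4 * (m : ℂ) ^ 2 - 1) / 12 * (if m + p = 0 then ρ.c else 0),
      fun h => by simp [h], LinearMap.ext fun x => ?_⟩
    simp only [Module.End.mul_apply, LinearMap.add_apply, LinearMap.smul_apply,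
      Module.End.one_apply]
    linear_combination (norm := module) ρ.hGG m p x
  · refine ⟨1, -((m : ℂ) - (p : ℂ) / 2), 0, fun _ => rfl, LinearMap.ext fun x => ?_⟩
    simp only [Module.End.mul_apply, LinearMap.add_apply, LinearMap.smul_apply,
      Module.End.one_apply]
    rw [add_comm m p]
    linear_combination (norm := module) -ρ.hLG p m x
  · refine ⟨1, (p : ℂ) - (m : ℂ) / 2, 0, fun _ => rfl, LinearMap.ext fun x => ?_⟩
    simp only [Module.End.mul_apply, LinearMap.add_apply, LinearMap.smul_apply,
      Module.End.one_apply]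
    linear_combination (norm := module) ρ.hLG m p x
  · refine ⟨1, (p : ℂ) - (m : ℂ), ((p : ℂ) ^ 3 - (p : ℂ)) / 12 * (if m + p = 0 then ρ.c else 0),
      fun h => by simp [h], LinearMap.ext fun x => ?_⟩
    simp only [Module.End.mul_apply, LinearMap.add_apply, LinearMap.smul_apply,
      Module.End.one_apply]
    linear_combination (norm := module) ρ.hLL m p x

def wordOp (u : List (Bool × ℤ)) : Module.End ℂ P :=
  (u.map ρ.basisOp).prod

theorem wordOp_nil : ρ.wordOp [] = 1 :=
  rfl

theorem wordOp_cons (d : Bool × ℤ) (u : List (Bool × ℤ)) :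
    ρ.wordOp (d :: u) = ρ.basisOp d * ρ.wordOp u :=
  List.prod_cons

theorem wordOp_append (u₁ u₂ : List (Bool × ℤ)) :
    ρ.wordOp (u₁ ++ u₂) = ρ.wordOp u₁ * ρ.wordOp u₂ := by
  simp only [wordOp, List.map_append, List.prod_append]

theorem wordOp_append_cons_cons (u₁ u₂ : List (Bool × ℤ)) (d e : Bool × ℤ) :
    ∃ ε a b : ℂ, (d.2 + e.2 ≠ 0 → b = 0) ∧
      ρ.wordOp (u₁ ++ d :: e :: u₂) =
        ε • ρ.wordOp (u₁ ++ e :: d :: u₂) + a • ρ.wordOp (u₁ ++ (d.1 == e.1, d.2 + e.2) :: u₂)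
          + b • ρ.wordOp (u₁ ++ u₂) := by
  obtain ⟨ε, a, b, hb, hde⟩ := ρ.basisOp_mul_basisOp d e
  refine ⟨ε, a, b, hb, ?_⟩
  simp only [wordOp_append, wordOp_cons, ← mul_assoc _ (ρ.basisOp e), hde]
  simp only [mul_add, add_mul, mul_smul_comm, smul_mul_assoc, one_mul, mul_assoc]

theorem wordOp_apply_mem_ev_or_od {v : P} (hv : v ∈ ρ.ev ∨ v ∈ ρ.od) (u : List (Bool × ℤ)) :
    ρ.wordOp u v ∈ ρ.ev ∨ ρ.wordOp u v ∈ ρ.od := by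
  induction u with
  | nil => exact hv
  | cons d u ih =>
    rw [wordOp_cons, Module.End.mul_apply]
    obtain ⟨_ | _, m⟩ := d
    · exact ih.elim (fun h => .inr (ρ.hGev m _ h)) (fun h => .inl (ρ.hGod m _ h))
    · exact ih.elim (fun h => .inl (ρ.hLev m _ h)) (fun h => .inr (ρ.hLod m _ h))

def wordDegree (u : List (Bool × ℤ)) : ℤ :=
  (u.map Prod.snd).sum

theorem wordDegree_nil : wordDegree [] = 0 :=
  rfl

theorem wordDegree_append (u₁ u₂ : List (Bool × ℤ)) :
    wordDegree (u₁ ++ u₂) = wordDegree u₁ + wordDegree u₂ := by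
  simp only [wordDegree, List.map_append, List.sum_append]

theorem wordDegree_cons (d : Bool × ℤ) (u : List (Bool × ℤ)) :
    wordDegree (d :: u) = d.2 + wordDegree u := by
  simp only [wordDegree, List.map_cons, List.sum_cons]

theorem length_mul_le_wordDegree {u : List (Bool × ℤ)} {r : ℤ} (hu : ∀ d ∈ u, r ≤ d.2) :
    u.length * r ≤ wordDegree u := by
  have := List.card_nsmul_le_sum (u.map Prod.snd) r (List.forall_mem_map.2 hu)
  rwa [List.length_map, nsmul_eq_mul] at this

theorem exists_mem_lt_of_length_mul_lt_wordDegree {u : List (Bool × ℤ)} {k : ℤ}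
    (hu : u.length * k < wordDegree u) : ∃ d ∈ u, k < d.2 := by
  by_contra! h
  have := List.sum_le_card_nsmul (u.map Prod.snd) k (List.forall_mem_map.2 h)
  simp only [List.length_map, nsmul_eq_mul] at this
  exact (hu.trans_le this).false

section Annihilation

variable {ρ} {v : P} {k : ℤ} (hv : ∀ m : ℤ, k < m → ρ.L m v = 0 ∧ ρ.G m v = 0)
include hv

theorem basisOp_apply_eq_zero {d : Bool × ℤ} (hd : k < d.2) : ρ.basisOp d v = 0 := by
  obtain ⟨_ | _, m⟩ := d
  exacts [(hv m hd).2, (hv m hd).1]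

theorem wordOp_append_cons_apply_eq_zero {s : ℕ}
    (ih : ∀ u : List (Bool × ℤ), u.length < s → s * k < wordDegree u → ρ.wordOp u v = 0)
    (u₂ : List (Bool × ℤ)) :
    ∀ (u₁ : List (Bool × ℤ)) (d : Bool × ℤ), k < d.2 → (u₁ ++ d :: u₂).length = s →
      s * k < wordDegree (u₁ ++ d :: u₂) → ρ.wordOp (u₁ ++ d :: u₂) v = 0 := by
  induction u₂ with
  | nil =>
    intro u₁ d hd _ _
    rw [wordOp_append, Module.End.mul_apply, wordOp_cons, Module.End.mul_apply,
      wordOp_nil, Module.End.one_apply, basisOp_apply_eq_zero hv hd, map_zero]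
  | cons e u₂ ihu =>
    intro u₁ d hd hlen hdeg
    obtain ⟨ε, a, b, hb, hswap⟩ := ρ.wordOp_append_cons_cons u₁ u₂ d e
    simp only [List.length_append, List.length_cons] at hlen
    simp only [wordDegree_append, wordDegree_cons] at hdeg
    have swapped : ρ.wordOp (u₁ ++ e :: d :: u₂) v = 0 := by
      rw [← List.singleton_append, ← List.append_assoc]
      refine ihu _ d hd ?_ ?_
      · simp only [List.length_append, List.length_cons, List.length_nil]; omega
      · simp only [wordDegree_append, wordDegree_cons, wordDegree_nil]; linarith
    have bracket : ρ.wordOp (u₁ ++ (d.1 == e.1, d.2 + e.2) :: u₂) v = 0 := by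
      refine ih _ ?_ ?_
      · simp only [List.length_append, List.length_cons]; omega
      · simp only [wordDegree_append, wordDegree_cons]; linarith
    have central : b • ρ.wordOp (u₁ ++ u₂) v = 0 := by
      rcases eq_or_ne (d.2 + e.2) 0 with hde | hde
      · rw [ih (u₁ ++ u₂) ?_ ?_, smul_zero]
        · simp only [List.length_append]; omega
        · simp only [wordDegree_append]; linarith
      · rw [hb hde, zero_smul]
    simp only [hswap, LinearMap.add_apply, LinearMap.smul_apply, swapped, bracket, central,
      smul_zero, add_zero]

theorem wordOp_apply_eq_zero_of_length_mul_lt (hk : 0 ≤ k) {u : List (Bool × ℤ)}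
    (hu : u.length * k < wordDegree u) : ρ.wordOp u v = 0 := by
  induction hs : u.length using Nat.strong_induction_on generalizing u with
  | _ s ih =>
  obtain ⟨d, hd, hdk⟩ := exists_mem_lt_of_length_mul_lt_wordDegree hu
  obtain ⟨u₁, u₂, rfl⟩ := List.append_of_mem hd
  refine wordOp_append_cons_apply_eq_zero hv (fun u' hu' hdeg => ?_) u₂ u₁ d hdk hs (hs ▸ hu)
  exact ih _ hu' ((mul_le_mul_of_nonneg_right (by exact_mod_cast hu'.le) hk).trans_lt hdeg) rfl

end Annihilation

theorem exists_ne_zero_mem_ev_or_od {v : P} (hv : v ≠ 0) :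
    ∃ v' : P, v' ≠ 0 ∧ (v' ∈ ρ.ev ∨ v' ∈ ρ.od) := by
  obtain ⟨x, hx, y, hy, rfl⟩ :=
    Submodule.mem_sup.1 (ρ.hcompl.sup_eq_top ▸ Submodule.mem_top : v ∈ ρ.ev ⊔ ρ.od)
  by_cases hx0 : x = 0
  · exact ⟨y, by simpa [hx0] using hv, .inr hy⟩
  · exact ⟨x, hx0, .inl hx⟩

/-- The submodule `U(R) v`. -/
def cyclicSpan (v : P) : Submodule ℂ P :=
  Submodule.span ℂ (Set.range fun u => ρ.wordOp u v)

theorem wordOp_apply_mem_cyclicSpan (u : List (Bool × ℤ)) (v : P) :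
    ρ.wordOp u v ∈ ρ.cyclicSpan v :=
  Submodule.subset_span ⟨u, rfl⟩

theorem basisOp_mem_cyclicSpan (d : Bool × ℤ) {v w : P} (hw : w ∈ ρ.cyclicSpan v) :
    ρ.basisOp d w ∈ ρ.cyclicSpan v := by
  refine (Submodule.span_le (p := (ρ.cyclicSpan v).comap (ρ.basisOp d))).2 ?_ hw
  rintro _ ⟨u, rfl⟩
  exact ρ.wordOp_apply_mem_cyclicSpan (d :: u) v

theorem invariant_cyclicSpan (v : P) : ρ.Invariant (ρ.cyclicSpan v) :=
  ⟨fun m _ => ρ.basisOp_mem_cyclicSpan (true, m), fun m _ => ρ.basisOp_mem_cyclicSpan (false, m)⟩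

theorem graded_cyclicSpan {v : P} (hv : v ∈ ρ.ev ∨ v ∈ ρ.od) : ρ.Graded (ρ.cyclicSpan v) := by
  refine le_antisymm ?_ (sup_le inf_le_left inf_le_left)
  rw [cyclicSpan, Submodule.span_le]
  rintro _ ⟨u, rfl⟩
  rcases ρ.wordOp_apply_mem_ev_or_od hv u with h | h
  · exact Submodule.mem_sup_left ⟨ρ.wordOp_apply_mem_cyclicSpan u v, h⟩
  · exact Submodule.mem_sup_right ⟨ρ.wordOp_apply_mem_cyclicSpan u v, h⟩

theorem cyclicSpan_eq_top (hsimple : ρ.IsSimple) {v : P} (hv0 : v ≠ 0)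
    (hv : v ∈ ρ.ev ∨ v ∈ ρ.od) : ρ.cyclicSpan v = ⊤ := by
  refine (hsimple.2 _ (ρ.invariant_cyclicSpan v) (ρ.graded_cyclicSpan hv)).resolve_left ?_
  intro hbot
  exact hv0 (by simpa [hbot, wordOp_nil] using ρ.wordOp_apply_mem_cyclicSpan [] v)

/-- The modes spanning `R^{(r)} = ⊕_{m>r} ℂL_m ⊕ ⊕_{m>r-1} ℂG_m`. -/
def generatorsAbove (r : ℤ) : Set (Module.End ℂ P) :=
  {op | (∃ m : ℤ, r < m ∧ op = ρ.L m) ∨ (∃ m : ℤ, r - 1 < m ∧ op = ρ.G m)}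

theorem exists_map_basisOp_eq {r : ℤ} {l : List (Module.End ℂ P)}
    (hl : ∀ op ∈ l, op ∈ ρ.generatorsAbove r) :
    ∃ u : List (Bool × ℤ), u.map ρ.basisOp = l ∧ ∀ d ∈ u, r ≤ d.2 := by
  induction l with
  | nil => exact ⟨[], rfl, by simp⟩
  | cons op l ih =>
    obtain ⟨u, rfl, hu⟩ := ih fun op' h => hl op' (List.mem_cons_of_mem _ h)
    rcases hl op List.mem_cons_self with ⟨m, hm, rfl⟩ | ⟨m, hm, rfl⟩
    · exact ⟨(true, m) :: u, rfl, List.forall_mem_cons.2 ⟨hm.le, hu⟩⟩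
    · exact ⟨(false, m) :: u, rfl, List.forall_mem_cons.2 ⟨show r ≤ m by omega, hu⟩⟩

def nilpotentPart (r : ℤ) : Submodule ℂ P where
  carrier := {w | ∃ n : ℕ, ∀ l : List (Module.End ℂ P),
    (∀ op ∈ l, op ∈ ρ.generatorsAbove r) → n ≤ l.length → l.prod w = 0}
  zero_mem' := ⟨0, fun l _ _ => map_zero _⟩
  add_mem' := by
    rintro x y ⟨n₁, h₁⟩ ⟨n₂, h₂⟩
    refine ⟨max n₁ n₂, fun l hl hlen => ?_⟩
    rw [map_add, h₁ l hl (le_of_max_le_left hlen), h₂ l hl (le_of_max_le_right hlen), add_zero]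
  smul_mem' := by
    rintro c x ⟨n, h⟩
    exact ⟨n, fun l hl hlen => by rw [map_smul, h l hl hlen, smul_zero]⟩

theorem cyclicSpan_le_nilpotentPart {v : P} {k r : ℤ} (hk : 0 ≤ k)
    (hv : ∀ m : ℤ, k < m → ρ.L m v = 0 ∧ ρ.G m v = 0) (hr : k < r) :
    ρ.cyclicSpan v ≤ ρ.nilpotentPart r := by
  rw [cyclicSpan, Submodule.span_le]
  rintro _ ⟨u, rfl⟩
  refine ⟨(u.length * k - wordDegree u).toNat + 1, fun l hl hlen => ?_⟩
  obtain ⟨u', rfl, hu'⟩ := ρ.exists_map_basisOp_eq hl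
  rw [List.length_map] at hlen
  have hdeg := length_mul_le_wordDegree hu'
  have hr' : (u'.length : ℤ) * (k + 1) ≤ u'.length * r := by gcongr; omega
  have hlen' : u.length * k - wordDegree u < u'.length := by
    have := Int.self_le_toNat (u.length * k - wordDegree u)
    omega
  change ρ.wordOp u' (ρ.wordOp u v) = 0
  rw [← Module.End.mul_apply, ← wordOp_append]
  refine wordOp_apply_eq_zero_of_length_mul_lt hv hk ?_
  rw [List.length_append, wordDegree_append]
  push_cast
  linarith

end RamondRep

/-- let P be a simple restricted Ramond module. Then for any nonzero
v ∈ P and any sufficiently large r, P is a locally nilpotent module over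
R^{(r)} = ⊕_{m>r} ℂL_m ⊕ ⊕_{m>r-1} ℂG_m: for every w ∈ P there is n such that every
composite of at least n operators from R^{(r)} annihilates w. -/
theorem restricted_simple_locally_nilpotent
    (ρ : RamondRep P) (hsimple : ρ.IsSimple) (hres : ρ.IsRestricted) :
    ∀ v : P, v ≠ 0 → ∃ r₀ : ℤ, ∀ r : ℤ, r₀ ≤ r → ∀ w : P, ∃ n : ℕ,
      ∀ l : List (P →ₗ[ℂ] P),
        (∀ op ∈ l, (∃ m : ℤ, r < m ∧ op = ρ.L m) ∨ (∃ m : ℤ, r - 1 < m ∧ op = ρ.G m)) →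
        n ≤ l.length →
        l.foldr (fun op u => op u) w = 0 := by
  intro v hv
  obtain ⟨v', hv'0, hv'⟩ := ρ.exists_ne_zero_mem_ev_or_od hv
  obtain ⟨k, hk⟩ := hres v'
  refine ⟨max k 0 + 1, fun r hr w => ?_⟩
  have hv'k : ∀ m : ℤ, max k 0 < m → ρ.L m v' = 0 ∧ ρ.G m v' = 0 :=
    fun m hm => hk m ((le_max_left k 0).trans_lt hm)
  have hw : w ∈ ρ.nilpotentPart r :=
    ρ.cyclicSpan_le_nilpotentPart (le_max_right k 0) hv'k (Int.add_one_le_iff.mp hr)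
      (ρ.cyclicSpan_eq_top hsimple hv'0 hv' ▸ Submodule.mem_top)
  obtain ⟨n, hn⟩ := hw
  exact ⟨n, fun l hl hlen => (List.foldr_apply_eq_prod_apply l w).trans (hn l hl hlen)⟩
end

section
/- Let P be a simple restricted R-module on which some L_k (k ≥ 2) acts injectively. Then there exists a smallest integer b ≥ k such that the subspace M_b = {w ∈ P : L_m w = 0 for all m > b and G_n w = 0 for all n > b-1} is nonzero, and M_b is a B-submodule-closed subspace: L_p M_b ⊆ M_b and G_q M_b ⊆ M_b for all p ≥ 0, q ≥ 1, so M_b is a B-module. -/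
variable {P : Type*} [AddCommGroup P] [Module ℂ P]

/-- The subspace M_b = {w ∈ P : L_m w = 0 for all m > b, G_n w = 0 for all n > b-1}. -/
def Mset (ρ : RamondRep P) (b : ℤ) : Set P :=
  {w : P | (∀ m : ℤ, b < m → ρ.L m w = 0) ∧ (∀ n : ℤ, b - 1 < n → ρ.G n w = 0)}

/-- Theorem 4.2(1): let P be a simple restricted Ramond module on which
some L_k (k ≥ 2) acts injectively. Then there is a smallest b ≥ k with M_b ≠ 0, and
M_b is stable under L_p (p ≥ 0) and G_q (q ≥ 1), i.e. M_b is a B-module. -/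
theorem exists_smallest_Mb
    (ρ : RamondRep P) (hsimple : ρ.IsSimple) (hres : ρ.IsRestricted)
    (k : ℤ) (hk : 2 ≤ k) (hinj : ∀ v : P, ρ.L k v = 0 → v = 0) :
    ∃ b : ℤ, k ≤ b ∧
      (∃ w ∈ Mset ρ b, w ≠ 0) ∧
      (∀ b' : ℤ, b' < b → ∀ w ∈ Mset ρ b', w = 0) ∧
      (∀ p : ℤ, 0 ≤ p → ∀ w ∈ Mset ρ b, ρ.L p w ∈ Mset ρ b) ∧
      (∀ q : ℤ, 1 ≤ q → ∀ w ∈ Mset ρ b, ρ.G q w ∈ Mset ρ b) := by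
  have mono : ∀ b b' : ℤ, b ≤ b' → Mset ρ b ⊆ Mset ρ b' := by
    intro b b' hbb w hw
    exact ⟨fun m hm => hw.1 m (by omega), fun n hn => hw.2 n (by omega)⟩
  obtain ⟨v, hv⟩ := hsimple.1
  obtain ⟨k₀, hk₀⟩ := hres v
  have hvmem : v ∈ Mset ρ (max k (k₀ + 1)) := by
    refine mono (k₀ + 1) _ (le_max_right _ _) ⟨?_, ?_⟩
    · intro m hm; exact (hk₀ m (by omega)).1
    · intro n hn; exact (hk₀ n (by omega)).2
  obtain ⟨b, ⟨hkb, w0, hw0, hw0ne⟩, hleast⟩ :=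
    Int.exists_least_of_bdd (P := fun b => k ≤ b ∧ ∃ w ∈ Mset ρ b, w ≠ 0)
      ⟨k, fun z hz => hz.1⟩ ⟨max k (k₀ + 1), le_max_left _ _, v, hvmem, hv⟩
  refine ⟨b, hkb, ⟨w0, hw0, hw0ne⟩, ?_, ?_, ?_⟩
  · intro b' hb' w hw
    by_contra hne
    rcases lt_or_ge b' k with h | h
    · exact hne (hinj w (hw.1 k h))
    · exact absurd (hleast b' ⟨h, w, hw, hne⟩) (by omega)
  · intro p hp w hw
    refine ⟨?_, ?_⟩
    · intro m hm
      have h1 := ρ.hLL p m w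
      rw [hw.1 m hm, hw.1 (p + m) (by omega), if_neg (by omega : ¬ p + m = 0)] at h1
      simpa using h1
    · intro n hn
      have h1 := ρ.hLG p n w
      rw [hw.2 n hn, hw.2 (p + n) (by omega)] at h1
      simpa using h1
  · intro q hq w hw
    refine ⟨?_, ?_⟩
    · intro m hm
      have h1 := ρ.hLG m q w
      rw [hw.1 m hm, hw.2 (m + q) (by omega)] at h1
      simpa using h1
    · intro n hn
      have h1 := ρ.hGG n q w
      rw [hw.2 n (by omega), hw.1 (n + q) (by omega), if_neg (by omega : ¬ n + q = 0)] at h1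
      simpa using h1
end

section
/- Let l = ℂx ⊕ ℂy be the 2-dimensional Lie algebra with [x,y] = y, and let k = (∂-1)^{-1}ℂ[∂^{±1}] with action x·f(∂) = ∂ f'(∂) + f(∂)/(∂²(∂-1)) and y·f(∂) = ∂ f(∂). Then this defines a module structure on k: x·(y·f) - y·(x·f) = y·f for all f ∈ k. -/
open RatFunc

/-- The space k = (∂-1)⁻¹ ℂ[∂^{±1}], realized inside the field ℂ(X) of rational
functions as the span of the elements (X-1)⁻¹ Xⁿ, n ∈ ℤ. -/
noncomputable def kSpace : Submodule ℂ (RatFunc ℂ) :=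
  Submodule.span ℂ {h : RatFunc ℂ | ∃ n : ℤ, h = (RatFunc.X - 1)⁻¹ * RatFunc.X ^ n}

/-- The action of x: x·f = ∂ f' + f/(∂²(∂-1)), where the derivative f ↦ f' is the
unique ℂ-derivation of ℂ(∂) with ∂' = 1. -/
noncomputable def xAct (D : Derivation ℂ (RatFunc ℂ) (RatFunc ℂ)) (f : RatFunc ℂ) :
    RatFunc ℂ :=
  RatFunc.X * D f + f / (RatFunc.X ^ 2 * (RatFunc.X - 1))

/-- The action of y: y·f = ∂ f. -/
noncomputable def yAct (f : RatFunc ℂ) : RatFunc ℂ := RatFunc.X * f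

lemma Xsub1_ne : (RatFunc.X : RatFunc ℂ) - 1 ≠ 0 := by
  intro h
  have h1 : (RatFunc.X : RatFunc ℂ) = 1 := by linear_combination h
  have h2 : algebraMap (Polynomial ℂ) (RatFunc ℂ) Polynomial.X
      = algebraMap (Polynomial ℂ) (RatFunc ℂ) 1 := by
    rw [RatFunc.algebraMap_X, map_one, h1]
  have := RatFunc.algebraMap_injective ℂ h2
  simpa [Polynomial.coeff_one] using congrArg (Polynomial.coeff · 1) this

lemma key (D : Derivation ℂ (RatFunc ℂ) (RatFunc ℂ)) (hD : D RatFunc.X = 1) (n : ℤ) :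
    xAct D ((RatFunc.X - 1)⁻¹ * RatFunc.X ^ n)
      = ((n : ℂ) - 1) • ((RatFunc.X - 1)⁻¹ * RatFunc.X ^ n)
        + (-1 : ℂ) • ((RatFunc.X - 1)⁻¹ * RatFunc.X ^ (n-1))
        + (-1 : ℂ) • ((RatFunc.X - 1)⁻¹ * RatFunc.X ^ (n-2)) := by
  have hx : (RatFunc.X : RatFunc ℂ) ≠ 0 := RatFunc.X_ne_zero
  have hx1 : (RatFunc.X : RatFunc ℂ) - 1 ≠ 0 := Xsub1_ne
  have hsub : D (RatFunc.X - 1) = 1 := by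
    rw [map_sub, hD, D.map_one_eq_zero, sub_zero]
  have h1 : (RatFunc.X : RatFunc ℂ) ^ n = RatFunc.X ^ (n - 2) * RatFunc.X ^ (2:ℕ) := by
    rw [show n = (n-2)+(2:ℕ) by push_cast; ring, zpow_add₀ hx, zpow_natCast]
    push_cast; ring_nf
  have h2 : (RatFunc.X : RatFunc ℂ) ^ (n-1) = RatFunc.X ^ (n - 2) * RatFunc.X := by
    rw [show n - 1 = (n-2)+1 by ring, zpow_add₀ hx, zpow_one]
  have hu : ((RatFunc.X : RatFunc ℂ) - 1) * (RatFunc.X - 1)⁻¹ = 1 := mul_inv_cancel₀ hx1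
  have hw : (RatFunc.X : RatFunc ℂ) * RatFunc.X⁻¹ = 1 := mul_inv_cancel₀ hx
  rw [xAct, D.leibniz, D.leibniz_inv, D.leibniz_zpow, hsub, hD]
  simp only [smul_eq_mul, zsmul_eq_mul, Algebra.smul_def, map_sub, map_neg, map_one,
    map_intCast]
  rw [h1, h2]
  generalize (RatFunc.X : RatFunc ℂ) ^ (n-2) = t
  rw [div_eq_mul_inv, mul_inv]
  linear_combination (t * ((RatFunc.X - 1)⁻¹)^2 * (RatFunc.X * RatFunc.X⁻¹ + 1)) * hw
    - (t * (RatFunc.X - 1)⁻¹ * (RatFunc.X^2 + RatFunc.X + 1)) * hu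

/-- for the 2-dimensional Lie algebra l = ℂx ⊕ ℂy with [x,y] = y, the
formulas x·f = ∂f' + f/(∂²(∂-1)), y·f = ∂f define an l-module structure on
k = (∂-1)⁻¹ℂ[∂^{±1}]: the actions preserve k and x·(y·f) - y·(x·f) = y·f for all
f ∈ k. -/
theorem kSpace_is_l_module (D : Derivation ℂ (RatFunc ℂ) (RatFunc ℂ))
    (hD : D RatFunc.X = 1) :
    (∀ f ∈ kSpace, xAct D f ∈ kSpace) ∧
    (∀ f ∈ kSpace, yAct f ∈ kSpace) ∧
    (∀ f ∈ kSpace, xAct D (yAct f) - yAct (xAct D f) = yAct f) := by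
  have gen_mem : ∀ n : ℤ, (RatFunc.X - 1)⁻¹ * RatFunc.X ^ n ∈ kSpace := fun n =>
    Submodule.subset_span ⟨n, rfl⟩
  refine ⟨?_, ?_, ?_⟩
  · intro f hf
    induction hf using Submodule.span_induction with
    | mem g hg =>
      obtain ⟨n, rfl⟩ := hg
      rw [key D hD n]
      exact add_mem (add_mem (Submodule.smul_mem _ _ (gen_mem n))
        (Submodule.smul_mem _ _ (gen_mem (n-1)))) (Submodule.smul_mem _ _ (gen_mem (n-2)))
    | zero => simp [xAct]
    | add a b _ _ ha hb =>
      have : xAct D (a + b) = xAct D a + xAct D b := by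
        simp only [xAct, map_add]; ring
      rw [this]; exact add_mem ha hb
    | smul c a _ ha =>
      have : xAct D (c • a) = c • xAct D a := by
        simp only [xAct, Derivation.map_smul, mul_smul_comm, smul_div_assoc, smul_add]
      rw [this]; exact Submodule.smul_mem _ _ ha
  · intro f hf
    induction hf using Submodule.span_induction with
    | mem g hg =>
      obtain ⟨n, rfl⟩ := hg
      have : yAct ((RatFunc.X - 1)⁻¹ * RatFunc.X ^ n)
          = (RatFunc.X - 1)⁻¹ * RatFunc.X ^ (n + 1) := by
        rw [yAct, zpow_add₀ RatFunc.X_ne_zero, zpow_one]; ring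
      rw [this]; exact gen_mem (n+1)
    | zero => simp [yAct]
    | add a b _ _ ha hb =>
      have : yAct (a + b) = yAct a + yAct b := by simp only [yAct]; ring
      rw [this]; exact add_mem ha hb
    | smul c a _ ha =>
      have : yAct (c • a) = c • yAct a := by
        simp only [yAct, Algebra.smul_def]; ring
      rw [this]; exact Submodule.smul_mem _ _ ha
  · intro f _
    simp only [xAct, yAct, D.leibniz, hD, smul_eq_mul]
    ring
end
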